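/- The alternative interpretation functor ⟦·⟧^♭, which multiplies the standard interpretation of each red spider with a inputs and b outputs by i^{a+b} and of each Hadamard node by −i, is not sound for the rule (S3'R): concretely, ⟦red cap (0→2)⟧^♭ = i^2·⟦red cap⟧ = −(1,0,0,1)^T (up to the appropriate normalization), while ⟦green cap⟧^♭ = (1,0,0,1)^T, so the ♭-interpretations of the two compact structures differ by the sign −1. -/

import Mathlib

open Matrix Complex

open scoped Kronecker

noncomputable def Hmat : Matrix (Fin 2) (Fin 2) ℂ :=
  ((1 : ℂ) / Real.sqrt 2) • !![1, 1; 1, -1]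

/-- standard interpretation of the green cap: the Bell state (1,0,0,1)ᵀ -/
noncomputable def greenCap : Fin 2 × Fin 2 → ℂ := fun p => if p.1 = p.2 then 1 else 0

/-- standard interpretation of the red cap: (H⊗H)·(1,0,0,1)ᵀ -/
noncomputable def redCap : Fin 2 × Fin 2 → ℂ := (Hmat ⊗ₖ Hmat).mulVec greenCap

/-- ♭-interpretation of the red cap: extra factor i^{0+2} on the red spider -/
noncomputable def redCapFlat : Fin 2 × Fin 2 → ℂ := (Complex.I ^ (0 + 2 : ℕ)) • redCap

lemma sqrt2_ne : (Real.sqrt 2 : ℂ) ≠ 0 := by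
  norm_cast
  positivity

lemma redCap_eq : redCap = greenCap := by
  funext p
  obtain ⟨i, j⟩ := p
  simp only [redCap, greenCap, mulVec, dotProduct, Hmat, kroneckerMap_apply,
    Fintype.sum_prod_type, Fin.sum_univ_two, Matrix.smul_apply, smul_eq_mul]
  fin_cases i <;> fin_cases j <;>
    simp [Matrix.cons_val_zero, Matrix.cons_val_one] <;>
    field_simp <;> ring_nf <;>
    rw [← Complex.ofReal_pow, Real.sq_sqrt (by norm_num : (0:ℝ) ≤ 2)] <;> norm_num

theorem flat_interpretation_distinguishes :
    redCapFlat = -greenCap ∧ redCapFlat ≠ greenCap := by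
  have h : redCapFlat = -greenCap := by
    simp [redCapFlat, redCap_eq, Complex.I_sq]
  refine ⟨h, ?_⟩
  rw [h]
  intro hc
  have := congrFun hc (0, 0)
  simp [greenCap] at this
  exact (by norm_num : ((1:ℂ)) ≠ -1) (by linear_combination -this)
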